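/- arXiv:1901.06781 — 5 statements merged into one kernel-verified Lean document; each statement's English description precedes it below -/
import Mathlib

section
/- Let p = nk+1 be a prime with n = 2m even and k odd, and let H = {x^n : x ∈ 𝔽_p^×} be the multiplicative subgroup of 𝔽_p^× of index n. If p > n^4 + 5, then H is not sum-free: there exist x, y, z ∈ H with x + y = z. -/
/-!
Let `χ` be a multiplicative character of `𝔽_q` of exact order `n`. Its kernel is the group
`H` of `n`-th powers, and `∑_{i<n} χ^i(a)` vanishes for `a ∉ H`. So if no `a ∈ H` has
`1 - a ∈ H`, then `∑_a (∑_i χ^i(a)) (∑_j χ^j(1 - a)) = ∑_{i,j<n} J(χ^i, χ^j)` vanishes.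
The term `(0, 0)` is `q - 2`, and every other Jacobi sum has absolute value `1` or `√q`,
so `q - 2 ≤ (n² - 1) √q`, which fails once `q > n⁴ + 5`.
-/

open Pointwise

/-- The set of nonzero `n`-th power residues in `𝔽_p = ZMod p`. -/
def Hpow (p n : ℕ) : Set (ZMod p) := {x | ∃ u : (ZMod p)ˣ, (u : ZMod p) ^ n = x}

open Finset

theorem IsCyclic.exists_pow_orderOf_eq_of_map_eq_one {G M : Type*} [Group G] [IsCyclic G]
    [CommGroup M] (φ : G →* M) {x : G} (hx : φ x = 1) : ∃ y, y ^ orderOf φ = x := by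
  obtain ⟨g, hg⟩ := IsCyclic.exists_generator (α := G)
  obtain ⟨j, rfl⟩ := Subgroup.mem_zpowers_iff.mp (hg x)
  have hφj : φ ^ j = 1 := by
    refine MonoidHom.ext fun h => ?_
    obtain ⟨l, rfl⟩ := Subgroup.mem_zpowers_iff.mp (hg h)
    rw [MonoidHom.zpow_apply, map_zpow, ← zpow_mul, mul_comm, zpow_mul, ← map_zpow, hx,
      one_zpow, MonoidHom.one_apply]
  obtain ⟨t, rfl⟩ := orderOf_dvd_iff_zpow_eq_one.mpr hφj
  exact ⟨g ^ t, by rw [← zpow_natCast, ← zpow_mul, mul_comm]⟩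

theorem MulChar.exists_pow_orderOf_eq_of_apply_eq_one {F R : Type*} [Field F] [Finite F]
    [CommMonoidWithZero R] [Nontrivial R] (χ : MulChar F R) {a : F} (ha : χ a = 1) :
    ∃ u : Fˣ, (u : F) ^ orderOf χ = a := by
  have hunit : IsUnit a := by
    by_contra h
    rw [χ.map_nonunit h] at ha
    exact zero_ne_one ha
  have hφ : MulChar.mulEquivToUnitHom χ hunit.unit = 1 := by
    ext
    simpa using ha
  obtain ⟨u, hu⟩ := IsCyclic.exists_pow_orderOf_eq_of_map_eq_one _ hφ
  refine ⟨u, ?_⟩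
  rw [MulEquiv.orderOf_eq] at hu
  rw [← Units.val_pow_eq_pow_val, hu, IsUnit.unit_spec]

theorem MulChar.sum_range_pow_apply_eq_zero {R R' : Type*} [CommMonoid R] [CommRing R']
    [IsDomain R'] {χ : MulChar R R'} {n : ℕ} (hn : χ ^ n = 1) {a : R} (ha : χ a ≠ 1) :
    ∑ i ∈ range n, (χ ^ i) a = 0 := by
  by_cases hunit : IsUnit a
  · have hpow : ∀ i, (χ ^ i) a = χ a ^ i := fun i => by
      rw [← hunit.unit_spec, MulChar.pow_apply_coe]
    have hgeom := geom_sum_mul (χ a) n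
    rw [← hpow, hn, MulChar.one_apply hunit, sub_self] at hgeom
    simp only [hpow]
    exact (mul_eq_zero.mp hgeom).resolve_right (sub_ne_zero.mpr ha)
  · exact sum_eq_zero fun i _ => (χ ^ i).map_nonunit hunit

theorem norm_jacobiSum_le_sqrt_card {F : Type*} [Field F] [Fintype F] {χ ψ : MulChar F ℂ}
    (h : χ ≠ 1 ∨ ψ ≠ 1) : ‖jacobiSum χ ψ‖ ≤ √(Fintype.card F) := by
  have hone : (1 : ℝ) ≤ √(Fintype.card F) :=
    Real.one_le_sqrt.mpr (by exact_mod_cast Fintype.one_lt_card.le)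
  by_cases hχ : χ = 1
  · rw [hχ, jacobiSum_one_nontrivial (h.resolve_left (not_not.mpr hχ)), norm_neg, norm_one]
    exact hone
  by_cases hψ : ψ = 1
  · rw [hψ, jacobiSum_comm, jacobiSum_one_nontrivial hχ, norm_neg, norm_one]
    exact hone
  by_cases hχψ : χ * ψ = 1
  · classical
    have hnorm : ‖χ (-1)‖ = 1 := by
      simpa using Complex.norm_eq_one_of_mem_rootsOfUnity (χ.apply_mem_rootsOfUnity (-1))
    rw [eq_inv_of_mul_eq_one_right hχψ, jacobiSum_nontrivial_inv hχ, norm_neg, hnorm]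
    exact hone
  · have hchar : ringChar ℂ ≠ ringChar F := by
      rw [ringChar.eq_zero]
      exact (CharP.ringChar_ne_zero_of_finite F).symm
    have hmul := jacobiSum_mul_jacobiSum_inv hchar hχ hψ hχψ
    rw [← MulChar.star_eq_inv, ← MulChar.star_eq_inv] at hmul
    change _ * jacobiSum (χ.ringHomComp (starRingEnd ℂ)) (ψ.ringHomComp (starRingEnd ℂ)) = _
      at hmul
    rw [jacobiSum_ringHomComp, Complex.mul_conj, Complex.normSq_eq_norm_sq] at hmul
    have hsq : ‖jacobiSum χ ψ‖ ^ 2 = Fintype.card F := by exact_mod_cast hmul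
    rw [← hsq, Real.sqrt_sq (norm_nonneg _)]

theorem sum_sum_jacobiSum_eq_sum_mul {R R' ι κ : Type*} [CommRing R] [Fintype R]
    [CommRing R']
    (s : Finset ι) (t : Finset κ) (χ : ι → MulChar R R') (ψ : κ → MulChar R R') :
    ∑ i ∈ s, ∑ j ∈ t, jacobiSum (χ i) (ψ j) =
      ∑ a : R, (∑ i ∈ s, χ i a) * ∑ j ∈ t, ψ j (1 - a) := by
  simp only [jacobiSum, sum_mul_sum]
  exact (sum_congr rfl fun _ _ => sum_comm).trans sum_comm

theorem norm_sum_sum_jacobiSum_pow_sub_le {F : Type*} [Field F] [Fintype F]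
    (χ : MulChar F ℂ) :
    ‖∑ i ∈ range (orderOf χ), ∑ j ∈ range (orderOf χ), jacobiSum (χ ^ i) (χ ^ j) -
        (Fintype.card F - 2)‖ ≤ ((orderOf χ : ℝ) ^ 2 - 1) * √(Fintype.card F) := by
  classical
  set n := orderOf χ
  set P := range n ×ˢ range n
  have hn : 0 < n := orderOf_pos χ
  have h00 : ((0, 0) : ℕ × ℕ) ∈ P := mem_product.mpr ⟨mem_range.mpr hn, mem_range.mpr hn⟩
  have hsplit : ∑ i ∈ range n, ∑ j ∈ range n, jacobiSum (χ ^ i) (χ ^ j) -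
      (Fintype.card F - 2) = ∑ q ∈ P.erase (0, 0), jacobiSum (χ ^ q.1) (χ ^ q.2) := by
    rw [← sum_product', ← add_sum_erase P _ h00, pow_zero, jacobiSum_one_one,
      add_sub_cancel_left]
  have hterm : ∀ q ∈ P.erase (0, 0), ‖jacobiSum (χ ^ q.1) (χ ^ q.2)‖ ≤ √(Fintype.card F) := by
    intro q hq
    obtain ⟨hq0, hqP⟩ := mem_erase.mp hq
    obtain ⟨hi, hj⟩ := mem_product.mp hqP
    apply norm_jacobiSum_le_sqrt_card
    by_cases hq1 : q.1 = 0
    · exact .inr (pow_ne_one_of_lt_orderOf (fun h => hq0 (Prod.ext hq1 h)) (mem_range.mp hj))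
    · exact .inl (pow_ne_one_of_lt_orderOf hq1 (mem_range.mp hi))
  have hcard : ((P.erase (0, 0)).card : ℝ) = (n : ℝ) ^ 2 - 1 := by
    rw [card_erase_of_mem h00, card_product, card_range, Nat.cast_sub (Nat.one_le_iff_ne_zero.mpr
      (Nat.mul_ne_zero hn.ne' hn.ne')), Nat.cast_mul, Nat.cast_one, sq]
  rw [hsplit, ← hcard, ← nsmul_eq_mul]
  exact (norm_sum_le _ _).trans (sum_le_card_nsmul _ _ _ hterm)

theorem sub_one_mul_sqrt_lt_sub_two {N q : ℝ} (hN : 0 ≤ N) (hq : N ^ 2 + 6 ≤ q) :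
    (N - 1) * √q < q - 2 := by
  have hNq : N < √q := (Real.lt_sqrt hN).mpr (by linarith)
  have htwo : 2 ≤ √q := Real.le_sqrt_of_sq_le (by nlinarith)
  have hqq : √q * √q = q := Real.mul_self_sqrt (by nlinarith)
  nlinarith

theorem MulChar.exists_apply_eq_one_and_apply_one_sub_eq_one {F : Type*} [Field F] [Fintype F]
    (χ : MulChar F ℂ) (h : orderOf χ ^ 4 + 5 < Fintype.card F) :
    ∃ a, χ a = 1 ∧ χ (1 - a) = 1 := by
  by_contra! hno
  have hsum :
      ∑ i ∈ range (orderOf χ), ∑ j ∈ range (orderOf χ), jacobiSum (χ ^ i) (χ ^ j) = 0 := by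
    rw [sum_sum_jacobiSum_eq_sum_mul]
    refine sum_eq_zero fun a _ => ?_
    by_cases ha : χ a = 1
    · rw [sum_range_pow_apply_eq_zero (pow_orderOf_eq_one χ) (hno a ha), mul_zero]
    · rw [sum_range_pow_apply_eq_zero (pow_orderOf_eq_one χ) ha, zero_mul]
  have hbound := norm_sum_sum_jacobiSum_pow_sub_le χ
  rw [hsum, zero_sub, norm_neg] at hbound
  have hre : (Fintype.card F : ℝ) - 2 ≤ ‖(Fintype.card F : ℂ) - 2‖ := by
    simpa using Complex.re_le_norm ((Fintype.card F : ℂ) - 2)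
  have hq : ((orderOf χ : ℝ) ^ 2) ^ 2 + 6 ≤ Fintype.card F := by
    rw [← pow_mul]
    exact_mod_cast h
  linarith [sub_one_mul_sqrt_lt_sub_two (by positivity) hq]

theorem stmt_0_general (p n k : ℕ) (hp : p.Prime) (hpnk : p = n * k + 1)
    (hbig : p > n ^ 4 + 5) :
    ∃ x ∈ Hpow p n, ∃ y ∈ Hpow p n, ∃ z ∈ Hpow p n, x + y = z := by
  have : Fact p.Prime := ⟨hp⟩
  have hn : n ≠ 0 := by
    rintro rfl
    exact hp.ne_one (by simpa using hpnk)
  obtain ⟨χ, hχ⟩ := MulChar.exists_mulChar_orderOf (ZMod p)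
    (⟨k, by rw [ZMod.card]; omega⟩ : n ∣ Fintype.card (ZMod p) - 1)
    (Complex.isPrimitiveRoot_exp n hn)
  obtain ⟨a, ha, ha'⟩ :=
    χ.exists_apply_eq_one_and_apply_one_sub_eq_one (by rwa [hχ, ZMod.card])
  obtain ⟨u, hu⟩ := χ.exists_pow_orderOf_eq_of_apply_eq_one ha
  obtain ⟨v, hv⟩ := χ.exists_pow_orderOf_eq_of_apply_eq_one ha'
  rw [hχ] at hu hv
  exact ⟨a, ⟨u, hu⟩, 1 - a, ⟨v, hv⟩, 1, ⟨1, one_pow n⟩, add_sub_cancel a 1⟩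

/-- If `p = n*k + 1` is prime with `n = 2m` even and `k` odd, and `p > n^4 + 5`, then the
subgroup `H` of nonzero `n`-th power residues is not sum-free. -/
theorem stmt_0 (p n k m : ℕ) (hp : p.Prime) (hpnk : p = n * k + 1)
    (hn : n = 2 * m) (hm : 0 < m) (hk : Odd k) (hbig : p > n ^ 4 + 5) :
    ∃ x ∈ Hpow p n, ∃ y ∈ Hpow p n, ∃ z ∈ Hpow p n, x + y = z :=
  stmt_0_general p n k hp hpnk hbig
end

section
/- (Triangle symmetry) Suppose k = (p−1)/n is odd. Then for all integers i, j, ℓ: X_ℓ ⊆ X_i + X_j if and only if X_{i+m} ⊆ X_j + X_{ℓ+m}. -/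
/-!
Each `X_i` is an orbit of the group `H` of `n`-th powers acting on `𝔽_p` by multiplication,
so every sumset `X_a + X_b` is `H`-stable and `X_c ⊆ X_a + X_b` just says that one element of
`X_c` is a sum `x + y` with `x ∈ X_a`, `y ∈ X_b`. Rewriting such a sum as `-x = y + (-c)` turns
the triangle `(a, b; c)` into `(-X_a, X_b; -X_c)`. Since `k` is odd, `-1 = g^{mk} ∈ X_m`, so
negation is the shift `X_i ↦ X_{i+m}`; as `2m = n`, applying the rotation three times returns
to the original triangle, which gives the converse.
-/

open Pointwise

/-- The coset `X_i = g^i · H` of the subgroup of `n`-th power residues. -/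
noncomputable def Xc (p n : ℕ) [Fact p.Prime] (g : ZMod p) (i : ℤ) : Set (ZMod p) :=
  g ^ i • Hpow p n

open MulAction

section OrbitSumset

variable {G M : Type*} [Group G] [AddCommGroup M] [DistribMulAction G M]

theorem MulAction.smul_mem_orbit_add_orbit {a b x : M} (hx : x ∈ orbit G a + orbit G b) (g : G) :
    g • x ∈ orbit G a + orbit G b := by
  obtain ⟨y, ⟨g₁, rfl⟩, z, ⟨g₂, rfl⟩, rfl⟩ := hx
  exact ⟨(g * g₁) • a, mem_orbit _ _, (g * g₂) • b, mem_orbit _ _, by simp [mul_smul]⟩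

theorem MulAction.orbit_subset_orbit_add_orbit_iff {a b c : M} :
    orbit G c ⊆ orbit G a + orbit G b ↔ c ∈ orbit G a + orbit G b := by
  refine ⟨fun h => h (mem_orbit_self c), ?_⟩
  rintro hc _ ⟨g, rfl⟩
  exact smul_mem_orbit_add_orbit hc g

theorem MulAction.orbit_neg_subset_add_of_subset_add {a b c : M}
    (h : orbit G c ⊆ orbit G a + orbit G b) :
    orbit G (-a) ⊆ orbit G b + orbit G (-c) := by
  obtain ⟨_, ⟨g, rfl⟩, y, hy, hc⟩ := orbit_subset_orbit_add_orbit_iff.mp h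
  have hneg : orbit G (-a) = orbit G (-(g • a)) := by rw [← smul_neg, orbit_smul]
  rw [hneg, orbit_subset_orbit_add_orbit_iff]
  exact ⟨y, hy, -c, mem_orbit_self _, by rw [← hc]; dsimp only; abel⟩

end OrbitSumset

theorem orbit_range_powMonoidHom_val_zpow_add_mul {R : Type*} [CommRing R] (n : ℕ) (u : Rˣ)
    (i t : ℤ) :
    orbit (powMonoidHom n : Rˣ →* Rˣ).range ((u ^ (i + n * t) : Rˣ) : R) =
      orbit (powMonoidHom n : Rˣ →* Rˣ).range ((u ^ i : Rˣ) : R) := by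
  have h : ((u ^ (i + n * t) : Rˣ) : R) =
      (⟨(u ^ t) ^ n, ⟨u ^ t, rfl⟩⟩ : (powMonoidHom n : Rˣ →* Rˣ).range) •
        ((u ^ i : Rˣ) : R) := by
    change _ = (((u ^ t) ^ n * u ^ i : Rˣ) : R)
    rw [← zpow_natCast, ← zpow_mul, ← zpow_add, mul_comm (t : ℤ), add_comm]
  rw [h, orbit_smul]

theorem Xc_eq_orbit (p n : ℕ) [Fact p.Prime] (u : (ZMod p)ˣ) (i : ℤ) :
    Xc p n u i = orbit (powMonoidHom n : (ZMod p)ˣ →* (ZMod p)ˣ).range ((u ^ i : (ZMod p)ˣ) :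
      ZMod p) := by
  ext x
  simp only [Xc, Hpow, Set.mem_smul_set, Set.mem_ofPred_eq, mem_orbit_iff, Subtype.exists,
    MonoidHom.mem_range, powMonoidHom_apply, Units.val_zpow_eq_zpow_val, Subgroup.mk_smul,
    Units.smul_def, smul_eq_mul, exists_exists_eq_and, exists_prop]
  simp only [Units.val_pow_eq_pow_val, mul_comm]

theorem val_pow_half_eq_neg_one {R : Type*} [CommRing R] [NoZeroDivisors R] {u : Rˣ} {N h : ℕ}
    (hu : IsPrimitiveRoot (u : R) N) (hN : N = 2 * h) (hh : h ≠ 0) :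
    ((u ^ h : Rˣ) : R) = -1 := by
  refine IsPrimitiveRoot.eq_neg_one_of_two_right ?_
  have := hu.pow_of_dvd hh ⟨2, by rw [hN, mul_comm]⟩
  rwa [hN, Nat.mul_div_cancel _ (Nat.pos_of_ne_zero hh), ← Units.val_pow_eq_pow_val] at this

section Cosets

variable {p n : ℕ} [Fact p.Prime] (u : (ZMod p)ˣ)

theorem Xc_add_mul (i t : ℤ) : Xc p n u (i + n * t) = Xc p n u i := by
  rw [Xc_eq_orbit, Xc_eq_orbit, orbit_range_powMonoidHom_val_zpow_add_mul]

theorem Xc_rotate {m : ℕ} {t : ℤ} (hneg_one : ((u ^ (m + n * t) : (ZMod p)ˣ) : ZMod p) = -1)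
    {i j l : ℤ} (h : Xc p n u l ⊆ Xc p n u i + Xc p n u j) :
    Xc p n u (i + m) ⊆ Xc p n u j + Xc p n u (l + m) := by
  have hneg (s : ℤ) : Xc p n u (s + m) = orbit (powMonoidHom n : (ZMod p)ˣ →* (ZMod p)ˣ).range
      (-((u ^ s : (ZMod p)ˣ) : ZMod p)) := by
    rw [Xc_eq_orbit, ← orbit_range_powMonoidHom_val_zpow_add_mul n u (s + m) t, add_assoc,
      add_comm, zpow_add, Units.val_mul, hneg_one, neg_one_mul]
  rw [Xc_eq_orbit, Xc_eq_orbit, Xc_eq_orbit] at h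
  rw [hneg, hneg, Xc_eq_orbit]
  exact orbit_neg_subset_add_of_subset_add h

end Cosets

theorem stmt_5_general (p n m k : ℕ) [Fact p.Prime] (hn : n = 2 * m)
    (hdvd : n ∣ p - 1) (hk : k = (p - 1) / n) (hkodd : Odd k)
    (g : ZMod p) (hg : IsPrimitiveRoot g (p - 1)) :
    ∀ i j l : ℤ,
      Xc p n g l ⊆ Xc p n g i + Xc p n g j ↔
        Xc p n g (i + m) ⊆ Xc p n g j + Xc p n g (l + m) := by
  have hp : 2 ≤ p := (Fact.out : p.Prime).two_le
  obtain ⟨u, rfl⟩ := hg.isUnit (by omega)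
  obtain ⟨t, ht⟩ := hkodd
  have hhalf : p - 1 = 2 * (m * k) := by rw [hk, ← mul_assoc, ← hn, Nat.mul_div_cancel' hdvd]
  have hneg_one : ((u ^ ((m : ℤ) + n * t) : (ZMod p)ˣ) : ZMod p) = -1 := by
    rw [← val_pow_half_eq_neg_one hg hhalf (by omega), ← zpow_natCast]
    congr 2
    push_cast [ht, hn]; ring
  have hper (i : ℤ) : Xc p n u (i + m + m) = Xc p n u i := by
    rw [← Xc_add_mul u i 1]
    congr 1
    push_cast [hn]; ring
  intro i j l
  refine ⟨Xc_rotate u hneg_one, fun h => ?_⟩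
  have h' := Xc_rotate u hneg_one h
  rw [hper] at h'
  have h'' := Xc_rotate u hneg_one h'
  rwa [hper, hper] at h''

/-- Triangle symmetry: if `k = (p-1)/n` is odd, then
`X_ℓ ⊆ X_i + X_j` iff `X_{i+m} ⊆ X_j + X_{ℓ+m}`. -/
theorem stmt_5 (p n m k : ℕ) [Fact p.Prime] (hn : n = 2 * m) (hm : 0 < m)
    (hdvd : n ∣ p - 1) (hk : k = (p - 1) / n) (hkodd : Odd k)
    (g : ZMod p) (hg : IsPrimitiveRoot g (p - 1)) :
    ∀ i j l : ℤ,
      Xc p n g l ⊆ Xc p n g i + Xc p n g j ↔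
        Xc p n g (i + m) ⊆ Xc p n g j + Xc p n g (l + m) :=
  stmt_5_general p n m k hn hdvd hk hkodd g hg
end

section
/- Suppose k = (p−1)/n is odd. If for every integer i we have X_i ⊄ X_i + X_i (i.e., X_i is not contained in its own sumset), then for every integer i we also have X_i ⊄ X_i + X_{i+m} and X_{i+m} ⊄ X_i + X_{i+m}. -/
open Pointwise

/-! Since `k` is odd, `-1 = g ^ (m * k) = (g ^ ((k - 1) / 2)) ^ n * g ^ m` lies in `g ^ m • H`, so
`X_{i+m} = -X_i`, both sumsets in question are `X_i - X_i`, and `X_{i+m} ⊆ X_i - X_i` is the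
negative of `X_i ⊆ X_i - X_i`. If some `x ∈ X_i` equals `a - b` with `a, b ∈ X_i`, then
`a = x + b ∈ X_i ∩ (X_i + X_i)`; as `X_i` is a coset of `H`, the ratios `y / a` (`y ∈ X_i`) map
both `X_i` and `X_i + X_i` into themselves and `a` onto every `y`, so `X_i ⊆ X_i + X_i`. -/

section Field

variable {F : Type*} [Field F] {X : Set F}

theorem Set.subset_add_self_of_mem_add (hX : ∀ a ∈ X, ∀ x ∈ X, (x / a) • X ⊆ X)
    (h0 : (0 : F) ∉ X) {a : F} (ha : a ∈ X) (haX : a ∈ X + X) : X ⊆ X + X := by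
  intro x hx
  have ha0 : a ≠ 0 := fun h => h0 (h ▸ ha)
  have hxX : x ∈ (x / a) • X + (x / a) • X := by
    rw [← smul_add]
    exact ⟨a, haX, div_mul_cancel₀ x ha0⟩
  exact Set.add_subset_add (hX a ha x hx) (hX a ha x hx) hxX

theorem Set.subset_add_self_of_subset_add_neg (hX : ∀ a ∈ X, ∀ x ∈ X, (x / a) • X ⊆ X)
    (h0 : (0 : F) ∉ X) (hne : X.Nonempty) (h : X ⊆ X + -X) : X ⊆ X + X := by
  obtain ⟨x, hx⟩ := hne
  obtain ⟨a, ha, b, hb, rfl⟩ := h hx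
  exact Set.subset_add_self_of_mem_add hX h0 ha ⟨a + b, hx, -b, hb, by ring⟩

end Field

theorem IsPrimitiveRoot.pow_eq_neg_one {R : Type*} [CommRing R] [NoZeroDivisors R] {ζ : R}
    {N : ℕ} (h : IsPrimitiveRoot ζ (2 * N)) (hN : N ≠ 0) : ζ ^ N = -1 := by
  apply IsPrimitiveRoot.eq_neg_one_of_two_right
  simpa [hN] using h.pow_of_dvd hN (dvd_mul_left N 2)

section PowerResidues

variable {p n : ℕ}

theorem one_mem_hpow : (1 : ZMod p) ∈ Hpow p n := ⟨1, by simp⟩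

theorem pow_mem_hpow [Fact p.Prime] {c : ZMod p} (hc : c ≠ 0) : c ^ n ∈ Hpow p n :=
  ⟨Units.mk0 c hc, rfl⟩

theorem div_mem_hpow [Fact p.Prime] {x y : ZMod p} (hx : x ∈ Hpow p n) (hy : y ∈ Hpow p n) :
    x / y ∈ Hpow p n := by
  obtain ⟨u, rfl⟩ := hx
  obtain ⟨v, rfl⟩ := hy
  exact ⟨u / v, by simp [div_pow]⟩

theorem smul_hpow_of_mem [Fact p.Prime] {c : ZMod p} (hc : c ∈ Hpow p n) :
    c • Hpow p n = Hpow p n := by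
  obtain ⟨u, rfl⟩ := hc
  ext x
  refine ⟨?_, fun hx => ⟨x / u ^ n, div_mem_hpow hx ⟨u, rfl⟩, ?_⟩⟩
  · rintro ⟨y, ⟨v, rfl⟩, rfl⟩
    exact ⟨u * v, by simp [mul_pow]⟩
  · simp [mul_div_cancel₀ x (pow_ne_zero n u.ne_zero)]

theorem zero_notMem_hpow [Fact p.Prime] : (0 : ZMod p) ∉ Hpow p n :=
  fun ⟨u, hu⟩ => pow_ne_zero n u.ne_zero hu

variable {g : ZMod p}

theorem xc_nonempty [Fact p.Prime] (i : ℤ) : (Xc p n g i).Nonempty :=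
  ⟨g ^ i • 1, Set.smul_mem_smul_set one_mem_hpow⟩

theorem zero_notMem_xc [Fact p.Prime] (hg : g ≠ 0) (i : ℤ) : (0 : ZMod p) ∉ Xc p n g i := by
  rintro ⟨h, hh, h0⟩
  have h_eq : h = 0 := (smul_eq_zero.mp h0).resolve_left (zpow_ne_zero i hg)
  exact zero_notMem_hpow (h_eq ▸ hh)

theorem div_smul_xc_subset [Fact p.Prime] (hg : g ≠ 0) (i : ℤ) :
    ∀ a ∈ Xc p n g i, ∀ x ∈ Xc p n g i, (x / a) • Xc p n g i ⊆ Xc p n g i := by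
  rintro _ ⟨b, hb, rfl⟩ _ ⟨y, hy, rfl⟩
  have hgi : g ^ i ≠ 0 := zpow_ne_zero i hg
  have hyb : g ^ i • y / g ^ i • b = y / b := by
    simp only [smul_eq_mul]; exact mul_div_mul_left y b hgi
  rw [Xc, hyb, smul_comm, smul_hpow_of_mem (div_mem_hpow hy hb)]

theorem xc_add_eq_neg [Fact p.Prime] {m k : ℕ} (hg : IsPrimitiveRoot g (n * k)) (hn : n = 2 * m)
    (hm : m ≠ 0) (hk : Odd k) (i : ℤ) : Xc p n g (i + m) = -Xc p n g i := by
  obtain ⟨t, rfl⟩ := hk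
  rw [hn, mul_assoc] at hg
  have hg0 : g ≠ 0 := hg.ne_zero (by positivity)
  have hneg : (g ^ t) ^ n * g ^ m = -1 := by
    rw [← hg.pow_eq_neg_one (by positivity), hn]
    ring
  calc Xc p n g (i + m) = g ^ i • ((g ^ t) ^ n * g ^ m) • Hpow p n := by
        rw [Xc, zpow_add₀ hg0, zpow_natCast, mul_smul, mul_smul, smul_comm ((g ^ t) ^ n),
          smul_hpow_of_mem (pow_mem_hpow (pow_ne_zero t hg0))]
    _ = -Xc p n g i := by
        rw [hneg, Set.neg_smul_set, one_smul, Set.smul_set_neg, Xc]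

end PowerResidues

/-- If `k = (p-1)/n` is odd and no `X_i` is contained in `X_i + X_i`, then also no `X_i`
and no `X_{i+m}` is contained in `X_i + X_{i+m}`. -/
theorem stmt_6 (p n m k : ℕ) [Fact p.Prime] (hn : n = 2 * m) (hm : 0 < m)
    (hdvd : n ∣ p - 1) (hk : k = (p - 1) / n) (hkodd : Odd k)
    (g : ZMod p) (hg : IsPrimitiveRoot g (p - 1))
    (hyp : ∀ i : ℤ, ¬ (Xc p n g i ⊆ Xc p n g i + Xc p n g i)) :
    ∀ i : ℤ, ¬ (Xc p n g i ⊆ Xc p n g i + Xc p n g (i + m)) ∧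
      ¬ (Xc p n g (i + m) ⊆ Xc p n g i + Xc p n g (i + m)) := by
  intro i
  have hpk : p - 1 = n * k := by rw [hk, Nat.mul_div_cancel' hdvd]
  have hg0 : g ≠ 0 := hg.ne_zero (Nat.sub_ne_zero_of_lt (Nat.Prime.one_lt Fact.out))
  have not_subset_sub : ¬ Xc p n g i ⊆ Xc p n g i + -Xc p n g i := fun h =>
    hyp i <| Set.subset_add_self_of_subset_add_neg (div_smul_xc_subset hg0 i)
      (zero_notMem_xc hg0 i) (xc_nonempty i) h
  rw [xc_add_eq_neg (hpk ▸ hg) hn hm.ne' hkodd i]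
  refine ⟨not_subset_sub, fun h => not_subset_sub ?_⟩
  simpa [neg_add, add_comm] using Set.neg_subset_neg.2 h
end

section
/- Let p be a prime, n = 2m a positive even integer with n ∣ p−1 and k = (p−1)/n odd, g a primitive root modulo p, and X_i = g^i·H for H the subgroup of n-th power residues, indices mod n. Suppose the X_i form a Directed Ramsey system: (1) for all i, X_i + X_i = ⋃_{j ≠ i} X_j; (2) for all i, X_i + X_{i+m} = {0} ∪ ⋃_{j ∉ {i, i+m}} X_j; (3) for all i, j with i ≠ j and j ≠ i+m, X_i + X_j = 𝔽_p ∖ {0}. Define R_i = {(x,y) ∈ 𝔽_p × 𝔽_p : x − y ∈ X_i} for 0 ≤ i < n and Id = {(x,x) : x ∈ 𝔽_p}. Then Id, R_0, …, R_{n−1} partition 𝔽_p × 𝔽_p, R_i^{−1} = R_{i+m} for all i (indices mod n), R_i ∘ R_i = (𝔽_p × 𝔽_p) ∖ (R_i ∪ Id) for all i, R_i ∘ R_{i+m} = (𝔽_p × 𝔽_p) ∖ (R_i ∪ R_{i+m}) for all i, and R_i ∘ R_j = (𝔽_p × 𝔽_p) ∖ Id for all i, j with i ≠ j and j ≠ i+m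 (indices mod n). -/
open Pointwise

/-- The identity relation on `𝔽_p`. -/
def IdRel (p : ℕ) : Set (ZMod p × ZMod p) := {q | q.1 = q.2}

/-- The relation `{(x,y) : x - y ∈ X}` on `𝔽_p` determined by a set `X ⊆ 𝔽_p`. -/
def diffRel (p : ℕ) (X : Set (ZMod p)) : Set (ZMod p × ZMod p) := {q | q.1 - q.2 ∈ X}

/-- Relational composition `R ∘ S`. -/
def relComp (p : ℕ) (R S : Set (ZMod p × ZMod p)) : Set (ZMod p × ZMod p) :=
  {q | ∃ y, (q.1, y) ∈ R ∧ (y, q.2) ∈ S}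

/-- Relational inverse `R⁻¹`. -/
def relInv (p : ℕ) (R : Set (ZMod p × ZMod p)) : Set (ZMod p × ZMod p) :=
  {q | (q.2, q.1) ∈ R}

/-!
Every nonzero `x` is `g ^ t` for some `t`, and since `n ∣ p - 1` the class of `t` mod `n` is
determined by `x`: the cosets `X_i` partition `𝔽_p^×`. The relation `R_X = {(x, y) | x - y ∈ X}`
turns sumsets into composites, `R_X ∘ R_Y = R_(X + Y)`, and commutes with `∪` and `ᶜ`, so each
relational identity is the corresponding sumset identity of the Ramsey system, rewritten through
the partition. For the inverse, `0 ∈ X_0 + X_m` gives `-1 ∈ X_m`, hence `-X_i = X_(i + m)`.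
-/

section DiffRel

variable {p : ℕ}

theorem diffRel_union (X Y : Set (ZMod p)) : diffRel p (X ∪ Y) = diffRel p X ∪ diffRel p Y :=
  rfl

theorem diffRel_compl (X : Set (ZMod p)) : diffRel p Xᶜ = (diffRel p X)ᶜ :=
  rfl

theorem diffRel_zero : diffRel p {0} = IdRel p := by
  ext q
  simp [diffRel, IdRel, sub_eq_zero]

theorem Disjoint.diffRel {X Y : Set (ZMod p)} (h : Disjoint X Y) :
    Disjoint (diffRel p X) (diffRel p Y) :=
  h.preimage fun q : ZMod p × ZMod p => q.1 - q.2

theorem relInv_diffRel (X : Set (ZMod p)) : relInv p (diffRel p X) = diffRel p (-X) := by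
  ext q
  simp [relInv, diffRel]

theorem relComp_diffRel (X Y : Set (ZMod p)) :
    relComp p (diffRel p X) (diffRel p Y) = diffRel p (X + Y) := by
  ext ⟨x, z⟩
  simp only [relComp, diffRel, Set.mem_ofPred_eq, Set.mem_add]
  constructor
  · rintro ⟨y, hxy, hyz⟩
    exact ⟨x - y, hxy, y - z, hyz, sub_add_sub_cancel x y z⟩
  · rintro ⟨a, ha, b, hb, hab⟩
    exact ⟨x - a, by simpa using ha, by rwa [show x - a - z = b by linear_combination -hab]⟩

end DiffRel

section Cosets

variable {p n : ℕ} [Fact p.Prime] {g : ZMod p}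

theorem prime_sub_one_ne_zero : p - 1 ≠ 0 :=
  Nat.sub_ne_zero_of_lt (Fact.out : p.Prime).one_lt

theorem IsPrimitiveRoot.exists_zpow_eq (hg : IsPrimitiveRoot g (p - 1)) {x : ZMod p}
    (hx : x ≠ 0) : ∃ t : ℤ, g ^ t = x := by
  have : NeZero (p - 1) := ⟨prime_sub_one_ne_zero⟩
  obtain ⟨t, -, ht⟩ := hg.eq_pow_of_pow_eq_one (ZMod.pow_card_sub_one_eq_one hx)
  exact ⟨t, by rwa [zpow_natCast]⟩

theorem mem_Xc_iff (hg : IsPrimitiveRoot g (p - 1)) {i : ℤ} {x : ZMod p} :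
    x ∈ Xc p n g i ↔ ∃ t : ℤ, g ^ t = x ∧ (t : ZMod n) = i := by
  have hg0 : g ≠ 0 := hg.ne_zero prime_sub_one_ne_zero
  simp only [Xc, Hpow, Set.mem_smul_set, Set.mem_ofPred_eq, smul_eq_mul]
  constructor
  · rintro ⟨-, ⟨u, rfl⟩, rfl⟩
    obtain ⟨s, hs⟩ := hg.exists_zpow_eq u.ne_zero
    refine ⟨i + n * s, ?_, by simp⟩
    rw [zpow_add₀ hg0, zpow_mul', zpow_natCast, hs]
  · rintro ⟨t, rfl, ht⟩
    obtain ⟨s, hs⟩ := (ZMod.intCast_eq_intCast_iff_dvd_sub _ _ _).mp ht.symm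
    refine ⟨_, ⟨Units.mk0 (g ^ s) (zpow_ne_zero s hg0), rfl⟩, ?_⟩
    rw [Units.val_mk0, ← zpow_natCast, ← zpow_mul', ← zpow_add₀ hg0, ← hs, add_sub_cancel]

theorem Xc_congr (hg : IsPrimitiveRoot g (p - 1)) {i j : ℤ} (h : (i : ZMod n) = j) :
    Xc p n g i = Xc p n g j := by
  ext x
  simp only [mem_Xc_iff hg, h]

theorem mul_mem_Xc (hg : IsPrimitiveRoot g (p - 1)) {i j : ℤ} {x y : ZMod p}
    (hx : x ∈ Xc p n g i) (hy : y ∈ Xc p n g j) : x * y ∈ Xc p n g (i + j) := by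
  have hg0 : g ≠ 0 := hg.ne_zero prime_sub_one_ne_zero
  obtain ⟨a, rfl, ha⟩ := (mem_Xc_iff hg).mp hx
  obtain ⟨b, rfl, hb⟩ := (mem_Xc_iff hg).mp hy
  exact (mem_Xc_iff hg).mpr ⟨a + b, zpow_add₀ hg0 a b, by push_cast [ha, hb]; rfl⟩

theorem zero_notMem_Xc (hg : IsPrimitiveRoot g (p - 1)) (i : ℤ) : (0 : ZMod p) ∉ Xc p n g i := by
  intro h
  obtain ⟨t, ht, -⟩ := (mem_Xc_iff hg).mp h
  exact zpow_ne_zero t (hg.ne_zero prime_sub_one_ne_zero) ht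

theorem exists_mem_Xc (hg : IsPrimitiveRoot g (p - 1)) {x : ZMod p} (hx : x ≠ 0) :
    ∃ t : ℤ, x ∈ Xc p n g t :=
  let ⟨t, ht⟩ := hg.exists_zpow_eq hx
  ⟨t, (mem_Xc_iff hg).mpr ⟨t, ht, rfl⟩⟩

theorem Xc_ext (hg : IsPrimitiveRoot g (p - 1)) {S T : Set (ZMod p)} (h0 : 0 ∈ S ↔ 0 ∈ T)
    (h : ∀ (t : ℤ) (x : ZMod p), x ∈ Xc p n g t → (x ∈ S ↔ x ∈ T)) : S = T := by
  ext x
  rcases eq_or_ne x 0 with rfl | hx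
  · exact h0
  · obtain ⟨t, ht⟩ := exists_mem_Xc hg hx
    exact h t x ht

theorem mem_Xc_iff_of_mem (hg : IsPrimitiveRoot g (p - 1)) (hdvd : n ∣ p - 1) {t j : ℤ}
    {x : ZMod p} (hx : x ∈ Xc p n g t) : x ∈ Xc p n g j ↔ (j : ZMod n) = t := by
  have hg0 : g ≠ 0 := hg.ne_zero prime_sub_one_ne_zero
  obtain ⟨a, rfl, ha⟩ := (mem_Xc_iff hg).mp hx
  rw [mem_Xc_iff hg, ← ha]
  constructor
  · rintro ⟨b, hb, hbj⟩
    rw [← hbj]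
    have hab : g ^ (a - b) = 1 := by rw [zpow_sub₀ hg0, hb, div_self (zpow_ne_zero a hg0)]
    rw [hg.zpow_eq_one_iff_dvd] at hab
    exact (ZMod.intCast_eq_intCast_iff_dvd_sub _ _ _).mpr
      ((Int.natCast_dvd_natCast.mpr hdvd).trans hab)
  · exact fun h => ⟨a, rfl, h.symm⟩

theorem disjoint_Xc (hg : IsPrimitiveRoot g (p - 1)) (hdvd : n ∣ p - 1) {i j : ℤ}
    (h : (i : ZMod n) ≠ j) : Disjoint (Xc p n g i) (Xc p n g j) :=
  Set.disjoint_left.mpr fun _ hi hj => h ((mem_Xc_iff_of_mem hg hdvd hi).mp hj).symm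

theorem mem_biUnion_Xc_iff_of_mem (hg : IsPrimitiveRoot g (p - 1)) (hdvd : n ∣ p - 1)
    (P : ZMod n → Prop) {t : ℤ} {x : ZMod p} (hx : x ∈ Xc p n g t) :
    x ∈ ⋃ j ∈ {j : ℤ | P j}, Xc p n g j ↔ P t := by
  simp only [Set.mem_iUnion, Set.mem_ofPred_eq, exists_prop]
  constructor
  · rintro ⟨j, hj, hxj⟩
    rwa [← (mem_Xc_iff_of_mem hg hdvd hx).mp hxj]
  · exact fun h => ⟨t, h, hx⟩

theorem neg_one_mem_Xc_sub (hg : IsPrimitiveRoot g (p - 1)) {i j : ℤ}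
    (h : (0 : ZMod p) ∈ Xc p n g i + Xc p n g j) : -1 ∈ Xc p n g (j - i) := by
  have hg0 : g ≠ 0 := hg.ne_zero prime_sub_one_ne_zero
  obtain ⟨x, hx, y, hy, hxy⟩ := h
  obtain ⟨a, rfl, ha⟩ := (mem_Xc_iff hg).mp hx
  obtain ⟨b, rfl, hb⟩ := (mem_Xc_iff hg).mp hy
  refine (mem_Xc_iff hg).mpr ⟨b - a, ?_, by push_cast [ha, hb]; rfl⟩
  rw [zpow_sub₀ hg0, eq_neg_of_add_eq_zero_right hxy, neg_div, div_self (zpow_ne_zero a hg0)]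

theorem neg_Xc (hg : IsPrimitiveRoot g (p - 1)) {m : ℕ} (hn : n = 2 * m)
    (h : -1 ∈ Xc p n g m) (i : ℤ) : -Xc p n g i = Xc p n g (i + m) := by
  ext x
  rw [Set.mem_neg]
  constructor
  · intro hx
    simpa [add_comm] using mul_mem_Xc hg h hx
  · intro hx
    have h2m : ((2 * m : ℕ) : ZMod n) = 0 := hn ▸ ZMod.natCast_self n
    push_cast at h2m
    rw [Xc_congr hg (i := i) (j := m + (i + m)) (by push_cast; linear_combination -h2m)]
    simpa using mul_mem_Xc hg h hx

theorem biUnion_Xc_ne_eq (hg : IsPrimitiveRoot g (p - 1)) (hdvd : n ∣ p - 1) (i : ℤ) :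
    ⋃ j ∈ {j : ℤ | (j : ZMod n) ≠ i}, Xc p n g j = (Xc p n g i ∪ {0})ᶜ := by
  refine Xc_ext (n := n) hg (by simp [zero_notMem_Xc hg]) fun t x hx => ?_
  rw [mem_biUnion_Xc_iff_of_mem hg hdvd (· ≠ (i : ZMod n)) hx]
  simp [mem_Xc_iff_of_mem hg hdvd hx, eq_comm, ne_of_mem_of_not_mem hx (zero_notMem_Xc hg t)]

theorem zero_union_biUnion_Xc_ne_ne_eq (hg : IsPrimitiveRoot g (p - 1)) (hdvd : n ∣ p - 1)
    (i i' : ℤ) : {0} ∪ ⋃ j ∈ {j : ℤ | (j : ZMod n) ≠ i ∧ (j : ZMod n) ≠ i'}, Xc p n g j =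
      (Xc p n g i ∪ Xc p n g i')ᶜ := by
  refine Xc_ext (n := n) hg (by simp [zero_notMem_Xc hg]) fun t x hx => ?_
  rw [Set.mem_union, mem_biUnion_Xc_iff_of_mem hg hdvd (fun a => a ≠ i ∧ a ≠ i') hx]
  simp [mem_Xc_iff_of_mem hg hdvd hx, eq_comm, ne_of_mem_of_not_mem hx (zero_notMem_Xc hg t)]

end Cosets

theorem stmt_8_general (p n m : ℕ) [Fact p.Prime] (hn : n = 2 * m)
    (hdvd : n ∣ p - 1)
    (g : ZMod p) (hg : IsPrimitiveRoot g (p - 1))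
    (h1 : ∀ i : ℤ, Xc p n g i + Xc p n g i =
      ⋃ j ∈ {j : ℤ | (j : ZMod n) ≠ (i : ZMod n)}, Xc p n g j)
    (h2 : ∀ i : ℤ, Xc p n g i + Xc p n g (i + m) =
      {(0 : ZMod p)} ∪ ⋃ j ∈ {j : ℤ | (j : ZMod n) ≠ (i : ZMod n) ∧
        (j : ZMod n) ≠ ((i + m : ℤ) : ZMod n)}, Xc p n g j)
    (h3 : ∀ i j : ℤ, (j : ZMod n) ≠ (i : ZMod n) → (j : ZMod n) ≠ ((i + m : ℤ) : ZMod n) →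
      Xc p n g i + Xc p n g j = {(0 : ZMod p)}ᶜ) :
    (∀ q : ZMod p × ZMod p, q ∈ IdRel p ∨ ∃ i : ℤ, q ∈ diffRel p (Xc p n g i)) ∧
    (∀ i : ℤ, Disjoint (IdRel p) (diffRel p (Xc p n g i))) ∧
    (∀ i j : ℤ, (j : ZMod n) ≠ (i : ZMod n) →
      Disjoint (diffRel p (Xc p n g i)) (diffRel p (Xc p n g j))) ∧
    (∀ i : ℤ, relInv p (diffRel p (Xc p n g i)) = diffRel p (Xc p n g (i + m))) ∧
    (∀ i : ℤ, relComp p (diffRel p (Xc p n g i)) (diffRel p (Xc p n g i)) =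
      (diffRel p (Xc p n g i) ∪ IdRel p)ᶜ) ∧
    (∀ i : ℤ, relComp p (diffRel p (Xc p n g i)) (diffRel p (Xc p n g (i + m))) =
      (diffRel p (Xc p n g i) ∪ diffRel p (Xc p n g (i + m)))ᶜ) ∧
    (∀ i j : ℤ, (j : ZMod n) ≠ (i : ZMod n) → (j : ZMod n) ≠ ((i + m : ℤ) : ZMod n) →
      relComp p (diffRel p (Xc p n g i)) (diffRel p (Xc p n g j)) = (IdRel p)ᶜ) := by
  have hneg : ∀ i : ℤ, -Xc p n g i = Xc p n g (i + m) := by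
    have h0 : (0 : ZMod p) ∈ Xc p n g 0 + Xc p n g (0 + m) := by rw [h2 0]; exact Or.inl rfl
    simpa using neg_Xc hg hn (by simpa using neg_one_mem_Xc_sub hg h0)
  refine ⟨fun q => ?_, fun i => ?_, fun i j hji => ?_, fun i => ?_, fun i => ?_, fun i => ?_,
    fun i j hji hjim => ?_⟩
  · rcases eq_or_ne (q.1 - q.2) 0 with h | h
    · exact Or.inl (sub_eq_zero.mp h)
    · exact Or.inr (exists_mem_Xc hg h)
  · rw [← diffRel_zero]
    exact (Set.disjoint_singleton_left.mpr (zero_notMem_Xc hg i)).diffRel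
  · exact (disjoint_Xc hg hdvd (Ne.symm hji)).diffRel
  · rw [relInv_diffRel, hneg]
  · rw [relComp_diffRel, h1, biUnion_Xc_ne_eq hg hdvd, diffRel_compl, diffRel_union, diffRel_zero]
  · rw [relComp_diffRel, h2, zero_union_biUnion_Xc_ne_ne_eq hg hdvd, diffRel_compl, diffRel_union]
  · rw [relComp_diffRel, h3 i j hji hjim, diffRel_compl, diffRel_zero]

/-- A Directed Ramsey system of cosets yields a Directed Ramsey algebra of relations. -/
theorem stmt_8 (p n m k : ℕ) [Fact p.Prime] (hn : n = 2 * m) (hm : 0 < m)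
    (hdvd : n ∣ p - 1) (hk : k = (p - 1) / n) (hkodd : Odd k)
    (g : ZMod p) (hg : IsPrimitiveRoot g (p - 1))
    (h1 : ∀ i : ℤ, Xc p n g i + Xc p n g i =
      ⋃ j ∈ {j : ℤ | (j : ZMod n) ≠ (i : ZMod n)}, Xc p n g j)
    (h2 : ∀ i : ℤ, Xc p n g i + Xc p n g (i + m) =
      {(0 : ZMod p)} ∪ ⋃ j ∈ {j : ℤ | (j : ZMod n) ≠ (i : ZMod n) ∧
        (j : ZMod n) ≠ ((i + m : ℤ) : ZMod n)}, Xc p n g j)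
    (h3 : ∀ i j : ℤ, (j : ZMod n) ≠ (i : ZMod n) → (j : ZMod n) ≠ ((i + m : ℤ) : ZMod n) →
      Xc p n g i + Xc p n g j = {(0 : ZMod p)}ᶜ) :
    (∀ q : ZMod p × ZMod p, q ∈ IdRel p ∨ ∃ i : ℤ, q ∈ diffRel p (Xc p n g i)) ∧
    (∀ i : ℤ, Disjoint (IdRel p) (diffRel p (Xc p n g i))) ∧
    (∀ i j : ℤ, (j : ZMod n) ≠ (i : ZMod n) →
      Disjoint (diffRel p (Xc p n g i)) (diffRel p (Xc p n g j))) ∧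
    (∀ i : ℤ, relInv p (diffRel p (Xc p n g i)) = diffRel p (Xc p n g (i + m))) ∧
    (∀ i : ℤ, relComp p (diffRel p (Xc p n g i)) (diffRel p (Xc p n g i)) =
      (diffRel p (Xc p n g i) ∪ IdRel p)ᶜ) ∧
    (∀ i : ℤ, relComp p (diffRel p (Xc p n g i)) (diffRel p (Xc p n g (i + m))) =
      (diffRel p (Xc p n g i) ∪ diffRel p (Xc p n g (i + m)))ᶜ) ∧
    (∀ i j : ℤ, (j : ZMod n) ≠ (i : ZMod n) → (j : ZMod n) ≠ ((i + m : ℤ) : ZMod n) →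
      relComp p (diffRel p (Xc p n g i)) (diffRel p (Xc p n g j)) = (IdRel p)ᶜ) :=
  stmt_8_general p n m hn hdvd g hg h1 h2 h3
end

section
/- There exists a primitive root g modulo 29 such that the cosets X_i = g^i·H (0 ≤ i < 4, indices mod 4) of the subgroup H of 4th-power residues in 𝔽_29^× form a 2-color Directed Anti-Ramsey algebra, i.e., with m = 2: (1) for all i, X_i + X_i = ⋃_{j ≠ i+2} X_j; (2) for all i, X_i + X_{i+2} = 𝔽_29; (3) for all i, j with i ≠ j and j ≠ i+2, X_i + X_j = 𝔽_29 ∖ {0}. -/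
open Pointwise

instance : Fact (Nat.Prime 29) := ⟨by norm_num⟩

/-!
Take `g = 2`, a primitive root modulo 29. Multiplying by a nonzero fourth power permutes the
fourth powers, so `X_i` only depends on `i mod 4` and equals `2 ^ (i mod 4)` times the finite
set of nonzero fourth powers. The three sumset identities then become identities between
explicit subsets of `ZMod 29`, which the kernel checks by evaluation.
-/

def XcFinset (p n : ℕ) [NeZero p] (g : ZMod p) (c : ZMod n) : Finset (ZMod p) :=
  g ^ c.val • ((Finset.univ : Finset (ZMod p)).erase 0).image (· ^ n)

variable {p : ℕ} [Fact p.Prime] {n : ℕ} {g : ZMod p}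

theorem Hpow_eq_coe_image :
    Hpow p n = ↑(((Finset.univ : Finset (ZMod p)).erase 0).image (· ^ n)) := by
  ext x
  simp only [Hpow, Set.mem_ofPred_eq, Finset.coe_image, Finset.coe_erase, Finset.coe_univ,
    Set.mem_image, Set.mem_sdiff, Set.mem_univ, Set.mem_singleton_iff, true_and]
  constructor
  · rintro ⟨u, rfl⟩
    exact ⟨u, u.ne_zero, rfl⟩
  · rintro ⟨a, ha, rfl⟩
    exact ⟨Units.mk0 a ha, rfl⟩

theorem pow_smul_Hpow (hg : g ≠ 0) : g ^ n • Hpow p n = Hpow p n := by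
  change g ^ n • Set.range _ = Set.range _
  rw [Set.smul_set_range]
  have hmul : (fun u : (ZMod p)ˣ => g ^ n • (u : ZMod p) ^ n) =
      fun u => ((Units.mk0 g hg * u : (ZMod p)ˣ) : ZMod p) ^ n := by
    simp [mul_pow]
  rw [hmul]
  exact (Equiv.mulLeft _).surjective.range_comp fun u : (ZMod p)ˣ => (u : ZMod p) ^ n

theorem Xc_periodic (hg : g ≠ 0) : Function.Periodic (Xc p n g) n := fun i => by
  rw [Xc, Xc, zpow_add₀ hg, mul_smul, zpow_natCast, pow_smul_Hpow hg]

theorem Xc_eq_Xc_val [NeZero n] (hg : g ≠ 0) (i : ℤ) :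
    Xc p n g i = Xc p n g (i : ZMod n).val := by
  rw [ZMod.val_intCast, Int.emod_def, mul_comm]
  exact ((Xc_periodic hg).sub_int_mul_eq _).symm

theorem Xc_eq_coe_XcFinset [NeZero n] (hg : g ≠ 0) (i : ℤ) :
    Xc p n g i = ↑(XcFinset p n g i) := by
  rw [Xc_eq_Xc_val hg, Xc, zpow_natCast, Hpow_eq_coe_image, XcFinset, Finset.coe_smul_finset]

theorem iUnion_intCast_mem_setOf {α : Type*} {n : ℕ} (P : ZMod n → Prop) (f : ZMod n → Set α) :
    ⋃ j ∈ {j : ℤ | P j}, f j = ⋃ c ∈ {c | P c}, f c :=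
  ZMod.intCast_surjective.iUnion_comp fun c => ⋃ (_ : P c), f c

theorem isPrimitiveRoot_two_zmod29 : IsPrimitiveRoot (2 : ZMod 29) 28 :=
  (IsPrimitiveRoot.iff (by norm_num)).mpr
    ⟨by decide, fun l hl₀ hl => by interval_cases l <;> decide⟩

theorem XcFinset_add_self_zmod29 (c : ZMod 4) :
    XcFinset 29 4 2 c + XcFinset 29 4 2 c =
      (Finset.univ.filter (· ≠ c + 2)).biUnion (XcFinset 29 4 2) := by
  revert c; decide

theorem XcFinset_add_opposite_zmod29 (c : ZMod 4) :
    XcFinset 29 4 2 c + XcFinset 29 4 2 (c + 2) = Finset.univ := by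
  revert c; decide

theorem XcFinset_add_zmod29 (c d : ZMod 4) (h₁ : d ≠ c) (h₂ : d ≠ c + 2) :
    XcFinset 29 4 2 c + XcFinset 29 4 2 d = {0}ᶜ := by
  revert c d; decide

/-- The cosets of the index-4 subgroup of `𝔽_29ˣ` form a 2-color Directed
Anti-Ramsey algebra. -/
theorem stmt_10 : ∃ g : ZMod 29, IsPrimitiveRoot g 28 ∧
    (∀ i : ℤ, Xc 29 4 g i + Xc 29 4 g i =
      ⋃ j ∈ {j : ℤ | (j : ZMod 4) ≠ ((i + 2 : ℤ) : ZMod 4)}, Xc 29 4 g j) ∧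
    (∀ i : ℤ, Xc 29 4 g i + Xc 29 4 g (i + 2) = Set.univ) ∧
    (∀ i j : ℤ, (j : ZMod 4) ≠ (i : ZMod 4) → (j : ZMod 4) ≠ ((i + 2 : ℤ) : ZMod 4) →
      Xc 29 4 g i + Xc 29 4 g j = {(0 : ZMod 29)}ᶜ) := by
  have hX := Xc_eq_coe_XcFinset (p := 29) (n := 4) (g := 2) (by decide)
  have hcast (i : ℤ) : ((i + 2 : ℤ) : ZMod 4) = (i : ZMod 4) + 2 := by push_cast; ring
  refine ⟨2, isPrimitiveRoot_two_zmod29, fun i => ?_, fun i => ?_, fun i j h₁ h₂ => ?_⟩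
  · simp only [hX]
    rw [iUnion_intCast_mem_setOf (· ≠ ((i + 2 : ℤ) : ZMod 4))
        fun c => (XcFinset 29 4 2 c : Set (ZMod 29)), hcast, ← Finset.coe_add,
      XcFinset_add_self_zmod29, Finset.coe_biUnion, Finset.coe_filter]
    simp only [Finset.mem_univ, true_and]
  · rw [hX, hX, hcast, ← Finset.coe_add, XcFinset_add_opposite_zmod29, Finset.coe_univ]
  · rw [hX, hX, ← Finset.coe_add, XcFinset_add_zmod29 _ _ h₁ (hcast i ▸ h₂), Finset.coe_compl,
      Finset.coe_singleton]
end
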